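/- arXiv:math/0602497 — 3 statements merged into one kernel-verified Lean document; each statement's English description precedes it below -/
import Mathlib

section
/- Let B be a double groupoid, F its frame (the image of the natural morphism Π : B → □(V,H) to the coarse double groupoid, sending a box to its quadruple of edges), K its associated abelian group bundle of boxes all of whose edges are identities, and μ : F → B a set-theoretic section of Π. Then the map Ψ : K ×_{p,γ} F → B, Ψ(K,F) = K ⇀ μ(F) (action of the core groupoid restricted to K), is a bijection. -/
/-- A groupoid over a base `Pt`, given concretely by a set of arrows with source and
target maps, identities, a (total, but only meaningful on composable pairs)
composition written in diagrammatic order (`comp g h` is "`g` then `h`",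
defined when `e g = s h`), and inverses. -/
structure PreGroupoid (Pt : Type) (Arr : Type) where
  s : Arr → Pt
  e : Arr → Pt
  id : Pt → Arr
  comp : Arr → Arr → Arr
  inv : Arr → Arr
  s_id : ∀ p, s (id p) = p
  e_id : ∀ p, e (id p) = p
  s_comp : ∀ g h, e g = s h → s (comp g h) = s g
  e_comp : ∀ g h, e g = s h → e (comp g h) = e h
  id_comp : ∀ g, comp (id (s g)) g = g
  comp_id : ∀ g, comp g (id (e g)) = g
  assoc : ∀ g h k, e g = s h → e h = s k → comp (comp g h) k = comp g (comp h k)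
  s_inv : ∀ g, s (inv g) = e g
  e_inv : ∀ g, e (inv g) = s g
  comp_inv : ∀ g, comp g (inv g) = id (s g)
  inv_comp : ∀ g, comp (inv g) g = id (e g)

/-- An action of a groupoid `G` over `Pt` on a fiber bundle `p : E → Pt`:
`act g x` is meaningful when `G.e g = p x`, lands in the fiber over `G.s g`,
is compatible with composition (`(gh) ▷ x = g ▷ (h ▷ x)`) and identities act
trivially. -/
structure GroupoidAction {Pt Arr E : Type} (G : PreGroupoid Pt Arr) (p : E → Pt) where
  act : Arr → E → E
  p_act : ∀ g x, G.e g = p x → p (act g x) = G.s g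
  act_id : ∀ x, act (G.id (p x)) x = x
  act_comp : ∀ g h x, G.e g = G.s h → G.e h = p x →
    act (G.comp g h) x = act g (act h x)

/-! ### Double groupoids.
A double groupoid with base `Pt`, boxes `Bx`, horizontal edges `Hh` and vertical
edges `Vv`: `hor` and `ver` are the edge groupoids over `Pt` (for a horizontal
edge `x`, `hor.s x` / `hor.e x` are its left / right endpoints; for a vertical
edge `g`, `ver.s g` / `ver.e g` are its top / bottom endpoints); `bh` is the
horizontal composition groupoid of boxes over `Vv` (source = left edge, target =
right edge) and `bv` the vertical composition groupoid of boxes over `Hh`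
(source = top edge, target = bottom edge), subject to compatibility of the edge
maps with the compositions and identities, and the interchange law. -/
structure DoubleGroupoid (Pt Bx Hh Vv : Type) where
  hor : PreGroupoid Pt Hh
  ver : PreGroupoid Pt Vv
  bh : PreGroupoid Vv Bx
  bv : PreGroupoid Hh Bx
  match_tl : ∀ A, hor.s (bv.s A) = ver.s (bh.s A)
  match_tr : ∀ A, hor.e (bv.s A) = ver.s (bh.e A)
  match_bl : ∀ A, hor.s (bv.e A) = ver.e (bh.s A)
  match_br : ∀ A, hor.e (bv.e A) = ver.e (bh.e A)
  t_hcomp : ∀ A C, bh.e A = bh.s C → bv.s (bh.comp A C) = hor.comp (bv.s A) (bv.s C)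
  b_hcomp : ∀ A C, bh.e A = bh.s C → bv.e (bh.comp A C) = hor.comp (bv.e A) (bv.e C)
  l_vcomp : ∀ A C, bv.e A = bv.s C → bh.s (bv.comp A C) = ver.comp (bh.s A) (bh.s C)
  r_vcomp : ∀ A C, bv.e A = bv.s C → bh.e (bv.comp A C) = ver.comp (bh.e A) (bh.e C)
  t_idh : ∀ g, bv.s (bh.id g) = hor.id (ver.s g)
  b_idh : ∀ g, bv.e (bh.id g) = hor.id (ver.e g)
  l_idv : ∀ x, bh.s (bv.id x) = ver.id (hor.s x)
  r_idv : ∀ x, bh.e (bv.id x) = ver.id (hor.e x)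
  idh_vcomp : ∀ g g', ver.e g = ver.s g' →
    bv.comp (bh.id g) (bh.id g') = bh.id (ver.comp g g')
  idv_hcomp : ∀ x y, hor.e x = hor.s y →
    bh.comp (bv.id x) (bv.id y) = bv.id (hor.comp x y)
  theta_eq : ∀ p, bh.id (ver.id p) = bv.id (hor.id p)
  interchange : ∀ A C A' C', bh.e A = bh.s C → bh.e A' = bh.s C' →
    bv.e A = bv.s A' → bv.e C = bv.s C' →
    bv.comp (bh.comp A C) (bh.comp A' C') = bh.comp (bv.comp A A') (bv.comp C C')

namespace DoubleGroupoid

variable {Pt Bx Hh Vv : Type} (D : DoubleGroupoid Pt Bx Hh Vv)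

/-- Top edge of a box. -/
def top (A : Bx) : Hh := D.bv.s A
/-- Bottom edge of a box. -/
def bot (A : Bx) : Hh := D.bv.e A
/-- Left edge of a box. -/
def lft (A : Bx) : Vv := D.bh.s A
/-- Right edge of a box. -/
def rgt (A : Bx) : Vv := D.bh.e A
/-- Top-left vertex of a box. -/
def tlv (A : Bx) : Pt := D.ver.s (D.bh.s A)
/-- Bottom-left vertex of a box. -/
def blv (A : Bx) : Pt := D.ver.e (D.bh.s A)
/-- Bottom-right vertex of a box. -/
def brv (A : Bx) : Pt := D.ver.e (D.bh.e A)
/-- The doubly degenerate box `Θ_p` at a point. -/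
def theta (p : Pt) : Bx := D.bh.id (D.ver.id p)
/-- The core groupoid: boxes whose top and right edges are identities.  (Its source
and target maps are the bottom-left and bottom-right vertices.) -/
def core : Set Bx :=
  {E | (∃ p, D.bv.s E = D.hor.id p) ∧ (∃ q, D.bh.e E = D.ver.id q)}
/-- The action of the core groupoid on boxes:
`E ⇀ A = {(id l(A), A) over (E, id b(A))}`; since `id l(A) ⬝ A = A`, this is the
vertical composite of `A` over `E ⬝ id b(A)`.  It is meaningful when
`br(E) = bl(A)`.  For `E, M` in the core, `coreAct E M` is also the core
composition `E ∘ M`. -/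
def coreAct (E A : Bx) : Bx :=
  D.bv.comp A (D.bh.comp E (D.bv.id (D.bv.e A)))
/-- The associated bundle `K`: boxes all of whose edges are identities. -/
def kBundle : Set Bx :=
  {K | (∃ p, D.bv.s K = D.hor.id p) ∧ (∃ p, D.bv.e K = D.hor.id p) ∧
       (∃ p, D.bh.s K = D.ver.id p) ∧ (∃ p, D.bh.e K = D.ver.id p)}

end DoubleGroupoid

namespace PreGroupoid

variable {Pt Arr : Type} (G : PreGroupoid Pt Arr)

theorem cancel_left (g h : Arr) (hc : G.e g = G.s h) :
    G.comp (G.inv g) (G.comp g h) = h := by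
  rw [← G.assoc (G.inv g) g h (G.e_inv g) hc, G.inv_comp g, hc, G.id_comp]

theorem cancel_inv_left (g h : Arr) (hc : G.s g = G.s h) :
    G.comp g (G.comp (G.inv g) h) = h := by
  rw [← G.assoc g (G.inv g) h (G.s_inv g).symm (by rw [G.e_inv, hc]), G.comp_inv g, hc,
    G.id_comp]

theorem inv_unique (g h : Arr) (hc : G.e g = G.s h)
    (H : G.comp g h = G.id (G.s g)) : h = G.inv g := by
  have h1 := G.cancel_left g h hc
  rw [H, ← G.e_inv g, G.comp_id] at h1
  exact h1.symm

end PreGroupoid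

namespace DoubleGroupoid

variable {Pt Bx Hh Vv : Type} (D : DoubleGroupoid Pt Bx Hh Vv)

theorem kEdges {K : Bx} (hK : K ∈ D.kBundle) :
    D.bv.s K = D.hor.id (D.ver.e (D.bh.s K)) ∧
    D.bv.e K = D.hor.id (D.ver.e (D.bh.s K)) ∧
    D.bh.s K = D.ver.id (D.ver.e (D.bh.s K)) ∧
    D.bh.e K = D.ver.id (D.ver.e (D.bh.s K)) := by
  obtain ⟨⟨p1, h1⟩, ⟨p2, h2⟩, ⟨p3, h3⟩, ⟨p4, h4⟩⟩ := hK
  have e3 : D.ver.e (D.bh.s K) = p3 := by rw [h3, D.ver.e_id]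
  have e2 : p2 = p3 := by
    have := D.match_bl K; rwa [h2, h3, D.hor.s_id, D.ver.e_id] at this
  have e1 : p1 = p3 := by
    have := D.match_tl K; rwa [h1, h3, D.hor.s_id, D.ver.s_id] at this
  have h24 : p2 = p4 := by
    have := D.match_br K; rwa [h2, h4, D.hor.e_id, D.ver.e_id] at this
  have e4 : p4 = p3 := by rw [← h24]; exact e2
  exact ⟨by rw [e3, h1, e1], by rw [e3, h2, e2], by rw [e3, h3], by rw [e3, h4, e4]⟩

theorem rgt_bvinv (A : Bx) : D.bh.e (D.bv.inv A) = D.ver.inv (D.bh.e A) := by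
  have hc : D.ver.e (D.bh.e A) = D.ver.s (D.bh.e (D.bv.inv A)) := by
    rw [← D.match_tr (D.bv.inv A), D.bv.s_inv, D.match_br]
  have h1 := D.r_vcomp A (D.bv.inv A) (D.bv.s_inv A).symm
  rw [D.bv.comp_inv A, D.r_idv, D.match_tr] at h1
  exact D.ver.inv_unique _ _ hc h1.symm

theorem lft_bvinv (A : Bx) : D.bh.s (D.bv.inv A) = D.ver.inv (D.bh.s A) := by
  have hc : D.ver.e (D.bh.s A) = D.ver.s (D.bh.s (D.bv.inv A)) := by
    rw [← D.match_tl (D.bv.inv A), D.bv.s_inv, D.match_bl]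
  have h1 := D.l_vcomp A (D.bv.inv A) (D.bv.s_inv A).symm
  rw [D.bv.comp_inv A, D.l_idv, D.match_tl] at h1
  exact D.ver.inv_unique _ _ hc h1.symm

theorem coreAct_edges {K : Bx} (F : Bx) (hK : K ∈ D.kBundle)
    (hp : D.ver.e (D.bh.s K) = D.ver.e (D.bh.s F)) :
    D.bv.s (D.coreAct K F) = D.bv.s F ∧ D.bv.e (D.coreAct K F) = D.bv.e F ∧
    D.bh.s (D.coreAct K F) = D.bh.s F ∧ D.bh.e (D.coreAct K F) = D.bh.e F := by
  obtain ⟨hK1, hK2, hK3, hK4⟩ := D.kEdges hK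
  rw [hp] at hK1 hK2 hK3 hK4
  have hs : D.hor.s (D.bv.e F) = D.ver.e (D.bh.s F) := D.match_bl F
  have c1 : D.bh.e K = D.bh.s (D.bv.id (D.bv.e F)) := by rw [hK4, D.l_idv, hs]
  have topX : D.bv.s (D.bh.comp K (D.bv.id (D.bv.e F))) = D.bv.e F := by
    rw [D.t_hcomp _ _ c1, hK1, D.bv.s_id, ← hs, D.hor.id_comp]
  have botX : D.bv.e (D.bh.comp K (D.bv.id (D.bv.e F))) = D.bv.e F := by
    rw [D.b_hcomp _ _ c1, hK2, D.bv.e_id, ← hs, D.hor.id_comp]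
  have lftX : D.bh.s (D.bh.comp K (D.bv.id (D.bv.e F))) = D.ver.id (D.ver.e (D.bh.s F)) := by
    rw [D.bh.s_comp _ _ c1, hK3]
  have rgtX : D.bh.e (D.bh.comp K (D.bv.id (D.bv.e F))) = D.ver.id (D.hor.e (D.bv.e F)) := by
    rw [D.bh.e_comp _ _ c1, D.r_idv]
  have c2 : D.bv.e F = D.bv.s (D.bh.comp K (D.bv.id (D.bv.e F))) := topX.symm
  unfold coreAct
  refine ⟨?_, ?_, ?_, ?_⟩
  · rw [D.bv.s_comp _ _ c2]
  · rw [D.bv.e_comp _ _ c2, botX]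
  · rw [D.l_vcomp _ _ c2, lftX, D.ver.comp_id]
  · rw [D.r_vcomp _ _ c2, rgtX, D.match_br, D.ver.comp_id]

theorem coreAct_kRecover {K F : Bx} (hK : K ∈ D.kBundle)
    (hp : D.ver.e (D.bh.s K) = D.ver.e (D.bh.s F)) :
    D.bh.comp (D.bv.comp (D.bv.inv F) (D.coreAct K F))
      (D.bv.id (D.hor.inv (D.bv.e F))) = K := by
  obtain ⟨hK1, hK2, hK3, hK4⟩ := D.kEdges hK
  rw [hp] at hK1 hK2 hK3 hK4
  have hs : D.hor.s (D.bv.e F) = D.ver.e (D.bh.s F) := D.match_bl F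
  have c1 : D.bh.e K = D.bh.s (D.bv.id (D.bv.e F)) := by rw [hK4, D.l_idv, hs]
  have topX : D.bv.s (D.bh.comp K (D.bv.id (D.bv.e F))) = D.bv.e F := by
    rw [D.t_hcomp _ _ c1, hK1, D.bv.s_id, ← hs, D.hor.id_comp]
  have step1 : D.bv.comp (D.bv.inv F) (D.coreAct K F)
      = D.bh.comp K (D.bv.id (D.bv.e F)) := by
    unfold coreAct
    exact D.bv.cancel_left F _ topX.symm
  rw [step1]
  have cc : D.bh.e (D.bv.id (D.bv.e F)) = D.bh.s (D.bv.id (D.hor.inv (D.bv.e F))) := by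
    rw [D.r_idv, D.l_idv, D.hor.s_inv]
  rw [D.bh.assoc _ _ _ c1 cc, D.idv_hcomp _ _ (D.hor.s_inv (D.bv.e F)).symm,
    D.hor.comp_inv, ← D.theta_eq, hs, ← hK4, D.bh.comp_id]

theorem kPart_spec (μ : Bx → Bx) (A : Bx)
    (hμt : D.bv.s (μ A) = D.bv.s A) (hμb : D.bv.e (μ A) = D.bv.e A)
    (hμl : D.bh.s (μ A) = D.bh.s A) (hμr : D.bh.e (μ A) = D.bh.e A) :
    D.bh.comp (D.bv.comp (D.bv.inv (μ A)) A) (D.bv.id (D.hor.inv (D.bv.e A))) ∈ D.kBundle ∧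
    D.ver.e (D.bh.s (D.bh.comp (D.bv.comp (D.bv.inv (μ A)) A)
      (D.bv.id (D.hor.inv (D.bv.e A))))) = D.ver.e (D.bh.s (μ A)) ∧
    D.coreAct (D.bh.comp (D.bv.comp (D.bv.inv (μ A)) A)
      (D.bv.id (D.hor.inv (D.bv.e A)))) (μ A) = A := by
  have comp1 : D.bv.e (D.bv.inv (μ A)) = D.bv.s A := by rw [D.bv.e_inv, hμt]
  have topY : D.bv.s (D.bv.comp (D.bv.inv (μ A)) A) = D.bv.e A := by
    rw [D.bv.s_comp _ _ comp1, D.bv.s_inv, hμb]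
  have botY : D.bv.e (D.bv.comp (D.bv.inv (μ A)) A) = D.bv.e A := D.bv.e_comp _ _ comp1
  have lftY : D.bh.s (D.bv.comp (D.bv.inv (μ A)) A) = D.ver.id (D.ver.e (D.bh.s A)) := by
    rw [D.l_vcomp _ _ comp1, D.lft_bvinv, hμl, D.ver.inv_comp]
  have rgtY : D.bh.e (D.bv.comp (D.bv.inv (μ A)) A) = D.ver.id (D.ver.e (D.bh.e A)) := by
    rw [D.r_vcomp _ _ comp1, D.rgt_bvinv, hμr, D.ver.inv_comp]
  have c3 : D.bh.e (D.bv.comp (D.bv.inv (μ A)) A)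
      = D.bh.s (D.bv.id (D.hor.inv (D.bv.e A))) := by
    rw [rgtY, D.l_idv, D.hor.s_inv, D.match_br]
  refine ⟨⟨⟨D.hor.s (D.bv.e A), ?_⟩, ⟨D.hor.s (D.bv.e A), ?_⟩, ⟨D.ver.e (D.bh.s A), ?_⟩,
    ⟨D.hor.s (D.bv.e A), ?_⟩⟩, ?_, ?_⟩
  · rw [D.t_hcomp _ _ c3, topY, D.bv.s_id, D.hor.comp_inv]
  · rw [D.b_hcomp _ _ c3, botY, D.bv.e_id, D.hor.comp_inv]
  · rw [D.bh.s_comp _ _ c3, lftY]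
  · rw [D.bh.e_comp _ _ c3, D.r_idv, D.hor.e_inv]
  · rw [D.bh.s_comp _ _ c3, lftY, D.ver.e_id, ← hμl]
  · show D.bv.comp (μ A) (D.bh.comp _ (D.bv.id (D.bv.e (μ A)))) = A
    have cc : D.bh.e (D.bv.id (D.hor.inv (D.bv.e A))) = D.bh.s (D.bv.id (D.bv.e A)) := by
      rw [D.r_idv, D.l_idv, D.hor.e_inv]
    rw [hμb, D.bh.assoc _ _ _ c3 cc, D.idv_hcomp _ _ (D.hor.e_inv (D.bv.e A)),
      D.hor.inv_comp, ← D.theta_eq, D.match_br, ← rgtY, D.bh.comp_id]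
    exact D.bv.cancel_inv_left (μ A) A hμt

end DoubleGroupoid

/-- Let `B` be a double groupoid, `K` its associated abelian group bundle (boxes all
of whose edges are identities), and `μ` a set-theoretic section of the natural map
`Π` onto the frame `F` (so `μ A` has the same four edges as `A` and depends only on
the four edges of `A`; the frame is the image `Set.range μ` of `μ`).  Then the map
`Ψ : K ×_{p,γ} F → B`, `Ψ(K, F) = K ⇀ μ-box F` (core action restricted to `K`,
where the fiber product is over `p(K) = γ(F) = ` bottom-left vertex), is a
bijection. -/
theorem kBundle_frame_bijection {Pt Bx Hh Vv : Type}
    (D : DoubleGroupoid Pt Bx Hh Vv) (μ : Bx → Bx)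
    (hμ_edges : ∀ A, D.top (μ A) = D.top A ∧ D.bot (μ A) = D.bot A ∧
      D.lft (μ A) = D.lft A ∧ D.rgt (μ A) = D.rgt A)
    (hμ_const : ∀ A A', D.top A = D.top A' → D.bot A = D.bot A' →
      D.lft A = D.lft A' → D.rgt A = D.rgt A' → μ A = μ A') :
    Function.Bijective
      (fun z : {z : Bx × Bx // z.1 ∈ D.kBundle ∧ z.2 ∈ Set.range μ ∧
          D.blv z.1 = D.blv z.2} => D.coreAct z.1.1 z.1.2) := by
  have hμ_idem : ∀ F ∈ Set.range μ, μ F = F := by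
    rintro _ ⟨A, rfl⟩
    obtain ⟨ht, hb, hl, hr⟩ := hμ_edges A
    exact hμ_const _ _ ht hb hl hr
  have hspec := fun A => D.kPart_spec μ A (hμ_edges A).1 (hμ_edges A).2.1
    (hμ_edges A).2.2.1 (hμ_edges A).2.2.2
  constructor
  · rintro ⟨⟨K, F⟩, hK, hFr, hblv⟩ ⟨⟨K', F'⟩, hK', hFr', hblv'⟩ h
    change D.coreAct K F = D.coreAct K' F' at h
    have hK2 : K ∈ D.kBundle := hK
    have hK2' : K' ∈ D.kBundle := hK'
    have hFr2 : F ∈ Set.range μ := hFr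
    have hFr2' : F' ∈ Set.range μ := hFr'
    have hblv2 : D.ver.e (D.bh.s K) = D.ver.e (D.bh.s F) := hblv
    have hblv2' : D.ver.e (D.bh.s K') = D.ver.e (D.bh.s F') := hblv'
    obtain ⟨e1, e2, e3, e4⟩ := D.coreAct_edges F hK2 hblv2
    obtain ⟨e1', e2', e3', e4'⟩ := D.coreAct_edges F' hK2' hblv2'
    have hF1 := D.coreAct_kRecover hK2 hblv2
    have hF2 := D.coreAct_kRecover hK2' hblv2'
    have hFF' : F = F' := by
      have h1 : μ (D.coreAct K F) = F := (hμ_const _ _ e1 e2 e3 e4).trans (hμ_idem F hFr2)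
      have h2 : μ (D.coreAct K' F') = F' :=
        (hμ_const _ _ e1' e2' e3' e4').trans (hμ_idem F' hFr2')
      rw [← h1, ← h2, h]
    have hKK' : K = K' := by rw [← hF1, ← hF2, h, hFF']
    exact Subtype.ext (by simp [hKK', hFF'])
  · intro A
    exact ⟨⟨(_, μ A), ⟨(hspec A).1, ⟨A, rfl⟩, (hspec A).2.1⟩⟩, (hspec A).2.2⟩
end

section
/- Let B be a slim double groupoid satisfying the filling condition, and let J be the subgroupoid of the free product V * H generated by the elements [A] = x g y⁻¹ h⁻¹ for all boxes A ∈ B with top x, right g, bottom y, left h. Then J is a normal subgroup bundle of V * H: for every generator [A] and every arrow u of V * H with target the bottom-left vertex of A, the conjugate u[A]u⁻¹ lies in J. -/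
/-! ### The free product of two groupoids over a common base, via reduced words.
Letters are arrows of the disjoint union quiver `V ⊔ H`; a path is either a base
point (`Sum.inl p`) or a nonempty composable list of letters (`Sum.inr l`).  The
reduction operations (removing identity letters, collapsing a single identity
letter to its base point, and multiplying adjacent letters lying in the same
factor groupoid) generate an equivalence relation whose classes are the elements
of the free product `V * H`. -/

/-- A letter: an arrow of `V` (`inl`) or of `H` (`inr`). -/
abbrev Letter (Av Ah : Type) := Av ⊕ Ah

variable {Pt Av Ah : Type}

def lsrc (GV : PreGroupoid Pt Av) (GH : PreGroupoid Pt Ah) : Letter Av Ah → Pt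
  | .inl g => GV.s g
  | .inr x => GH.s x

def ltgt (GV : PreGroupoid Pt Av) (GH : PreGroupoid Pt Ah) : Letter Av Ah → Pt
  | .inl g => GV.e g
  | .inr x => GH.e x

/-- The letter is an identity arrow of its factor groupoid. -/
def lIsId (GV : PreGroupoid Pt Av) (GH : PreGroupoid Pt Ah) : Letter Av Ah → Prop
  | .inl g => ∃ p, g = GV.id p
  | .inr x => ∃ p, x = GH.id p

/-- Which factor groupoid the letter belongs to. -/
def lFac : Letter Av Ah → Bool
  | .inl _ => true
  | .inr _ => false

/-- The inverse of a letter, taken in its factor groupoid. -/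
def linv (GV : PreGroupoid Pt Av) (GH : PreGroupoid Pt Ah) : Letter Av Ah → Letter Av Ah
  | .inl g => .inl (GV.inv g)
  | .inr x => .inr (GH.inv x)

/-- One-step reduction of paths in the quiver `V ⊔ H`. -/
inductive Red (GV : PreGroupoid Pt Av) (GH : PreGroupoid Pt Ah) :
    (Pt ⊕ List (Letter Av Ah)) → (Pt ⊕ List (Letter Av Ah)) → Prop
  | remove_id (l₁ l₂ : List (Letter Av Ah)) (u : Letter Av Ah) :
      lIsId GV GH u → l₁ ++ l₂ ≠ [] →
      Red GV GH (.inr (l₁ ++ u :: l₂)) (.inr (l₁ ++ l₂))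
  | single_id (u : Letter Av Ah) (p : Pt) :
      lIsId GV GH u → lsrc GV GH u = p →
      Red GV GH (.inr [u]) (.inl p)
  | merge_v (l₁ l₂ : List (Letter Av Ah)) (g g' : Av) :
      GV.e g = GV.s g' →
      Red GV GH (.inr (l₁ ++ .inl g :: .inl g' :: l₂))
        (.inr (l₁ ++ .inl (GV.comp g g') :: l₂))
  | merge_h (l₁ l₂ : List (Letter Av Ah)) (x x' : Ah) :
      GH.e x = GH.s x' →
      Red GV GH (.inr (l₁ ++ .inr x :: .inr x' :: l₂))
        (.inr (l₁ ++ .inr (GH.comp x x') :: l₂))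

/-- Consecutive letters alternate between the two factor groupoids. -/
def Alternating : List (Letter Av Ah) → Prop :=
  List.Chain' (fun a b => lFac a ≠ lFac b)

/-- Consecutive letters are composable (target of one = source of the next). -/
def Composable (GV : PreGroupoid Pt Av) (GH : PreGroupoid Pt Ah) :
    List (Letter Av Ah) → Prop :=
  List.Chain' (fun a b => ltgt GV GH a = lsrc GV GH b)

/-- Reduced path: a base point, or a nonempty composable word with no identity
letters in which consecutive letters lie in different factors. -/
def ReducedW (GV : PreGroupoid Pt Av) (GH : PreGroupoid Pt Ah) :
    (Pt ⊕ List (Letter Av Ah)) → Prop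
  | .inl _ => True
  | .inr l => l ≠ [] ∧ Composable GV GH l ∧ (∀ u ∈ l, ¬ lIsId GV GH u) ∧ Alternating l

/-- Length of a path (a base point has length 0). -/
def wlen : (Pt ⊕ List (Letter Av Ah)) → ℕ
  | .inl _ => 0
  | .inr l => l.length

variable {Pt Bx Hh Vv : Type}

/-- The bracket word `[A] = x g y⁻¹ h⁻¹` associated to a box `A` (top `x`, right
`g`, bottom `y`, left `h`), a loop of the free product `V * H` based at the
top-left vertex of `A`. -/
def brktWord (D : DoubleGroupoid Pt Bx Hh Vv) (A : Bx) : List (Letter Vv Hh) :=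
  [.inr (D.bv.s A), .inl (D.bh.e A),
   .inr (D.hor.inv (D.bv.e A)), .inl (D.ver.inv (D.bh.s A))]

/-- The word of a signed bracket `[A]^{±1}`. -/
def sbrktWord (D : DoubleGroupoid Pt Bx Hh Vv) (z : Bx × Bool) : List (Letter Vv Hh) :=
  if z.2 then brktWord D z.1
  else ((brktWord D z.1).map (linv D.ver D.hor)).reverse

/-- The path of the free product represented by a list of letters based at `p`
(the empty list represents the identity `[p]`). -/
def mkW (p : Pt) (l : List (Letter Vv Hh)) : Pt ⊕ List (Letter Vv Hh) :=
  match l with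
  | [] => .inl p
  | l => .inr l

/-- Membership in the subgroupoid `J` of `V * H` generated by the bracket
relations: the path `ω` represents an element of the fiber `J(p)` iff it is
equivalent in `V * H` to a product of signed brackets `[A₁]^{ε₁} ⋯ [Aₙ]^{εₙ}` of
boxes whose top-left vertex is `p`. -/
def InJ (D : DoubleGroupoid Pt Bx Hh Vv) (p : Pt)
    (ω : Pt ⊕ List (Letter Vv Hh)) : Prop :=
  ∃ L : List (Bx × Bool),
    (∀ z ∈ L, D.ver.s (D.bh.s z.1) = p) ∧
    Relation.EqvGen (Red D.ver D.hor) ω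
      (mkW p (L.flatMap (sbrktWord D)))

/-!
The fibres of `J` are closed under products and inverses, so it suffices to conjugate a single
bracket `[A]` by a single letter ending at its top-left corner. For a horizontal letter `x`, fill
`x` against the left edge of `A` by a box `F`; then `x [A] x⁻¹ = [F ⬝ A] [F]⁻¹` in `V * H`, with
`F ⬝ A` the horizontal composite. For a vertical letter `f`, filling the inverses of `f` and of the
top of `A` and inverting the result in both directions gives a box `F` with left edge `f` and
bottom the top of `A`; then `f [A] f⁻¹ = [F]⁻¹ [F ⬝ A]`, with the vertical composite.
-/

open Relation

theorem Relation.EqvGen.map {α β : Type*} {r : α → α → Prop} {s : β → β → Prop} (f : α → β)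
    (hf : ∀ a b, r a b → s (f a) (f b)) {a b : α} (h : EqvGen r a b) : EqvGen s (f a) (f b) := by
  induction h with
  | rel _ _ h => exact .rel _ _ (hf _ _ h)
  | refl _ => exact .refl _
  | symm _ _ _ ih => exact .symm _ _ ih
  | trans _ _ _ _ _ ih₁ ih₂ => exact .trans _ _ _ ih₁ ih₂

namespace PreGroupoid

variable {Pt Arr : Type} (G : PreGroupoid Pt Arr)

theorem eq_inv_of_comp_eq_id {g h : Arr} (hc : G.e g = G.s h)
    (hid : G.comp g h = G.id (G.s g)) : h = G.inv g :=
  calc h = G.comp (G.id (G.e g)) h := by rw [hc, G.id_comp]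
    _ = G.comp (G.comp (G.inv g) g) h := by rw [G.inv_comp]
    _ = G.comp (G.inv g) (G.comp g h) := G.assoc _ _ _ (G.e_inv g) hc
    _ = G.inv g := by rw [hid, ← G.e_inv, G.comp_id]

theorem inv_inv (g : Arr) : G.inv (G.inv g) = g :=
  (G.eq_inv_of_comp_eq_id (G.e_inv g) (by rw [G.inv_comp, G.s_inv])).symm

theorem inv_id (p : Pt) : G.inv (G.id p) = G.id p :=
  (G.eq_inv_of_comp_eq_id (by rw [G.e_id, G.s_id])
    (by simpa only [G.e_id, G.s_id] using G.comp_id (G.id p))).symm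

theorem inv_comp_rev {g h : Arr} (hc : G.e g = G.s h) :
    G.inv (G.comp g h) = G.comp (G.inv h) (G.inv g) := by
  have hc' : G.e (G.inv h) = G.s (G.inv g) := by rw [G.e_inv, G.s_inv, hc]
  refine (G.eq_inv_of_comp_eq_id (by rw [G.e_comp _ _ hc, G.s_comp _ _ hc', G.s_inv]) ?_).symm
  calc G.comp (G.comp g h) (G.comp (G.inv h) (G.inv g))
      = G.comp g (G.comp (G.comp h (G.inv h)) (G.inv g)) := by
        rw [G.assoc g h _ hc (by rw [G.s_comp _ _ hc', G.s_inv]),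
          G.assoc h (G.inv h) (G.inv g) (G.s_inv h).symm hc']
    _ = G.id (G.s (G.comp g h)) := by
        rw [G.comp_inv h, ← hc, ← G.s_inv, G.id_comp, G.comp_inv, G.s_comp _ _ hc]

end PreGroupoid

namespace DoubleGroupoid

variable {Pt Bx Hh Vv : Type} (D : DoubleGroupoid Pt Bx Hh Vv)

theorem bv_e_bh_inv (X : Bx) : D.bv.e (D.bh.inv X) = D.hor.inv (D.bv.e X) := by
  have hc : D.bh.e X = D.bh.s (D.bh.inv X) := (D.bh.s_inv X).symm
  refine D.hor.eq_inv_of_comp_eq_id (by rw [D.match_br, hc, ← D.match_bl]) ?_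
  rw [← D.b_hcomp _ _ hc, D.bh.comp_inv, D.b_idh, ← D.match_bl]

theorem bh_e_bv_inv (X : Bx) : D.bh.e (D.bv.inv X) = D.ver.inv (D.bh.e X) := by
  have hc : D.bv.e X = D.bv.s (D.bv.inv X) := (D.bv.s_inv X).symm
  refine D.ver.eq_inv_of_comp_eq_id (by rw [← D.match_br, hc, D.match_tr]) ?_
  rw [← D.r_vcomp _ _ hc, D.bv.comp_inv, D.r_idv, D.match_tr]

def Filling : Prop :=
  ∀ (x : Hh) (g : Vv), D.hor.e x = D.ver.s g → ∃ A : Bx, D.bv.s A = x ∧ D.bh.e A = g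

theorem exists_bot_lft_of_filling (hfill : D.Filling)
    {y : Hh} {f : Vv} (h : D.ver.e f = D.hor.s y) :
    ∃ F : Bx, D.bv.e F = y ∧ D.bh.s F = f := by
  obtain ⟨G, hGt, hGr⟩ := hfill (D.hor.inv y) (D.ver.inv f) (by rw [D.hor.e_inv, D.ver.s_inv, h])
  exact ⟨D.bh.inv (D.bv.inv G), by rw [D.bv_e_bh_inv, D.bv.e_inv, hGt, D.hor.inv_inv],
    by rw [D.bh.s_inv, D.bh_e_bv_inv, hGr, D.ver.inv_inv]⟩

end DoubleGroupoid

section Words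

variable {Pt Av Ah : Type} {GV : PreGroupoid Pt Av} {GH : PreGroupoid Pt Ah}

def letters : Pt ⊕ List (Letter Av Ah) → List (Letter Av Ah)
  | .inl _ => []
  | .inr l => l

@[simp] theorem letters_inr (l : List (Letter Av Ah)) : letters (Pt := Pt) (.inr l) = l := rfl

@[simp] theorem letters_mkW (p : Pt) (l : List (Letter Av Ah)) : letters (mkW p l) = l := by
  cases l <;> rfl

theorem Red.context (a b : List (Letter Av Ah)) (hab : a ++ b ≠ [])
    {ω ω' : Pt ⊕ List (Letter Av Ah)} (h : Red GV GH ω ω') :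
    Red GV GH (.inr (a ++ letters ω ++ b)) (.inr (a ++ letters ω' ++ b)) := by
  cases h with
  | remove_id l₁ l₂ u hu _ =>
    simpa [letters] using Red.remove_id (GV := GV) (GH := GH) (a ++ l₁) (l₂ ++ b) u hu
      (by simp_all)
  | single_id u p hu _ =>
    simpa [letters] using Red.remove_id (GV := GV) (GH := GH) a b u hu hab
  | merge_v l₁ l₂ g g' hc =>
    simpa [letters] using Red.merge_v (GV := GV) (GH := GH) (a ++ l₁) (l₂ ++ b) g g' hc
  | merge_h l₁ l₂ x x' hc =>
    simpa [letters] using Red.merge_h (GV := GV) (GH := GH) (a ++ l₁) (l₂ ++ b) x x' hc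

theorem eqvGen_context (a b : List (Letter Av Ah)) (hab : a ++ b ≠ [])
    {ω ω' : Pt ⊕ List (Letter Av Ah)} (h : EqvGen (Red GV GH) ω ω') :
    EqvGen (Red GV GH) (.inr (a ++ letters ω ++ b)) (.inr (a ++ letters ω' ++ b)) :=
  h.map (fun ω => Sum.inr (a ++ letters ω ++ b)) fun _ _ => Red.context a b hab

theorem eqvGen_merge_v (l₁ : List (Letter Av Ah)) {l₂ : List (Letter Av Ah)} {g g' k : Av}
    (hc : GV.e g = GV.s g') (hk : GV.comp g g' = k) :
    EqvGen (Red GV GH) (.inr (l₁ ++ .inl g :: .inl g' :: l₂)) (.inr (l₁ ++ .inl k :: l₂)) :=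
  hk ▸ .rel _ _ (Red.merge_v l₁ l₂ g g' hc)

theorem eqvGen_merge_h (l₁ : List (Letter Av Ah)) {l₂ : List (Letter Av Ah)} {x x' k : Ah}
    (hc : GH.e x = GH.s x') (hk : GH.comp x x' = k) :
    EqvGen (Red GV GH) (.inr (l₁ ++ .inr x :: .inr x' :: l₂)) (.inr (l₁ ++ .inr k :: l₂)) :=
  hk ▸ .rel _ _ (Red.merge_h l₁ l₂ x x' hc)

theorem eqvGen_cancel_linv (l₁ : List (Letter Av Ah)) {l₂ : List (Letter Av Ah)}
    (z : Letter Av Ah) (hne : l₁ ++ l₂ ≠ []) :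
    EqvGen (Red GV GH) (.inr (l₁ ++ linv GV GH z :: z :: l₂)) (.inr (l₁ ++ l₂)) := by
  cases z with
  | inl f =>
    exact .trans _ _ _ (eqvGen_merge_v l₁ (GV.e_inv f) (GV.inv_comp f))
      (.rel _ _ (Red.remove_id _ _ _ ⟨_, rfl⟩ hne))
  | inr x =>
    exact .trans _ _ _ (eqvGen_merge_h l₁ (GH.e_inv x) (GH.inv_comp x))
      (.rel _ _ (Red.remove_id _ _ _ ⟨_, rfl⟩ hne))

theorem eqvGen_pair_linv (z : Letter Av Ah) :
    EqvGen (Red GV GH) (.inr [z, linv GV GH z]) (.inl (lsrc GV GH z)) := by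
  cases z with
  | inl f =>
    exact .trans _ _ _ (eqvGen_merge_v [] (GV.s_inv f).symm (GV.comp_inv f))
      (.rel _ _ (Red.single_id _ _ ⟨_, rfl⟩ (GV.s_id _)))
  | inr x =>
    exact .trans _ _ _ (eqvGen_merge_h [] (GH.s_inv x).symm (GH.comp_inv x))
      (.rel _ _ (Red.single_id _ _ ⟨_, rfl⟩ (GH.s_id _)))

variable (GV GH) in
def wordInv (l : List (Letter Av Ah)) : List (Letter Av Ah) :=
  (l.map (linv GV GH)).reverse

variable (GV GH) in
def pathInv : Pt ⊕ List (Letter Av Ah) → Pt ⊕ List (Letter Av Ah)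
  | .inl p => .inl p
  | .inr l => .inr (wordInv GV GH l)

theorem linv_linv (u : Letter Av Ah) : linv GV GH (linv GV GH u) = u := by
  cases u <;> simp [linv, PreGroupoid.inv_inv]

@[simp] theorem wordInv_append (a b : List (Letter Av Ah)) :
    wordInv GV GH (a ++ b) = wordInv GV GH b ++ wordInv GV GH a := by
  simp [wordInv]

@[simp] theorem wordInv_cons (u : Letter Av Ah) (l : List (Letter Av Ah)) :
    wordInv GV GH (u :: l) = wordInv GV GH l ++ [linv GV GH u] := by
  simp [wordInv]

theorem lIsId.linv_eq {u : Letter Av Ah} (hu : lIsId GV GH u) : linv GV GH u = u := by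
  cases u with
  | inl g => obtain ⟨p, rfl⟩ := hu; simp [linv, PreGroupoid.inv_id]
  | inr x => obtain ⟨p, rfl⟩ := hu; simp [linv, PreGroupoid.inv_id]

theorem Red.pathInv {ω ω' : Pt ⊕ List (Letter Av Ah)} (h : Red GV GH ω ω') :
    Red GV GH (pathInv GV GH ω) (pathInv GV GH ω') := by
  cases h with
  | remove_id l₁ l₂ u hu hne =>
    simpa [_root_.pathInv, hu.linv_eq] using
      Red.remove_id (wordInv GV GH l₂) (wordInv GV GH l₁) u hu (by simp [wordInv] at hne ⊢; tauto)
  | single_id u p hu hp =>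
    simpa [_root_.pathInv, wordInv, hu.linv_eq] using Red.single_id u p hu hp
  | merge_v l₁ l₂ g g' hc =>
    simpa [_root_.pathInv, linv, GV.inv_comp_rev hc] using
      Red.merge_v (wordInv GV GH l₂) (wordInv GV GH l₁) (GV.inv g') (GV.inv g)
        (by rw [GV.e_inv, GV.s_inv, hc])
  | merge_h l₁ l₂ x x' hc =>
    simpa [_root_.pathInv, linv, GH.inv_comp_rev hc] using
      Red.merge_h (wordInv GV GH l₂) (wordInv GV GH l₁) (GH.inv x') (GH.inv x)
        (by rw [GH.e_inv, GH.s_inv, hc])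

end Words

theorem mkW_of_ne_nil {p : Pt} {l : List (Letter Vv Hh)} (hl : l ≠ []) : mkW p l = .inr l := by
  cases l with
  | nil => exact absurd rfl hl
  | cons _ _ => rfl

theorem pathInv_mkW {D : DoubleGroupoid Pt Bx Hh Vv} (p : Pt) (l : List (Letter Vv Hh)) :
    pathInv D.ver D.hor (mkW p l) = mkW p (wordInv D.ver D.hor l) := by
  cases l with
  | nil => rfl
  | cons u l => simp [mkW, pathInv]

theorem wordInv_sbrktWord (D : DoubleGroupoid Pt Bx Hh Vv) (z : Bx × Bool) :
    wordInv D.ver D.hor (sbrktWord D z) = sbrktWord D (z.1, !z.2) := by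
  obtain ⟨A, _ | _⟩ := z <;> simp [sbrktWord, wordInv, Function.comp_def, linv_linv]

theorem wordInv_flatMap_sbrktWord (D : DoubleGroupoid Pt Bx Hh Vv) (L : List (Bx × Bool)) :
    wordInv D.ver D.hor (L.flatMap (sbrktWord D)) =
      (L.reverse.map fun z => (z.1, !z.2)).flatMap (sbrktWord D) := by
  induction L with
  | nil => rfl
  | cons z L ih => simp [ih, wordInv_sbrktWord]

namespace InJ

variable {D : DoubleGroupoid Pt Bx Hh Vv} {p : Pt}

theorem of_eqvGen {ω ω' : Pt ⊕ List (Letter Vv Hh)} (h : EqvGen (Red D.ver D.hor) ω ω')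
    (h' : InJ D p ω') : InJ D p ω :=
  let ⟨L, hL, hω'⟩ := h'
  ⟨L, hL, .trans _ _ _ h hω'⟩

theorem flatMap_sbrktWord {L : List (Bx × Bool)} (hL : ∀ z ∈ L, D.ver.s (D.bh.s z.1) = p) :
    InJ D p (mkW p (L.flatMap (sbrktWord D))) :=
  ⟨L, hL, .refl _⟩

theorem append {a b : List (Letter Vv Hh)} (hb : b ≠ []) (ha : InJ D p (.inr a))
    (hb' : InJ D p (.inr b)) : InJ D p (.inr (a ++ b)) := by
  obtain ⟨L₁, hL₁, h₁⟩ := ha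
  obtain ⟨L₂, hL₂, h₂⟩ := hb'
  refine ⟨L₁ ++ L₂, fun z hz => (List.mem_append.mp hz).elim (hL₁ z) (hL₂ z), ?_⟩
  have e₁ : EqvGen (Red D.ver D.hor) (.inr (a ++ b)) (.inr (L₁.flatMap (sbrktWord D) ++ b)) := by
    simpa using eqvGen_context [] b (by simpa) h₁
  rcases eq_or_ne (L₁.flatMap (sbrktWord D)) [] with h0 | h0
  · rw [h0, List.nil_append] at e₁
    simpa [h0] using e₁.trans _ _ _ h₂
  · have e₂ := eqvGen_context (L₁.flatMap (sbrktWord D)) [] (by rwa [List.append_nil]) h₂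
    simp only [letters_inr, letters_mkW, List.append_nil] at e₂
    rw [List.flatMap_append, mkW_of_ne_nil (List.append_ne_nil_of_left_ne_nil h0 _)]
    exact e₁.trans _ _ _ e₂

theorem pathInv {ω : Pt ⊕ List (Letter Vv Hh)} (h : InJ D p ω) :
    InJ D p (pathInv D.ver D.hor ω) := by
  obtain ⟨L, hL, hω⟩ := h
  refine ⟨L.reverse.map fun z => (z.1, !z.2), ?_, ?_⟩
  · simp only [List.mem_map, List.mem_reverse]
    rintro _ ⟨z, hz, rfl⟩
    exact hL z hz
  · rw [← wordInv_flatMap_sbrktWord, ← pathInv_mkW]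
    exact hω.map (_root_.pathInv D.ver D.hor) fun _ _ => Red.pathInv

local notation:50 ω " ≈ʷ " ω' => EqvGen (Red D.ver D.hor) ω ω'

theorem conj_brktWord_inr (hfill : D.Filling) {A : Bx} {x : Hh}
    (hx : D.hor.e x = D.ver.s (D.bh.s A)) :
    InJ D (D.hor.s x) (.inr (.inr x :: brktWord D A ++ [.inr (D.hor.inv x)])) := by
  obtain ⟨F, hFt, hFr⟩ := hfill x (D.bh.s A) hx
  have hxA : D.hor.e x = D.hor.s (D.bv.s A) := hx.trans (D.match_tl A).symm
  have hFA : D.hor.e (D.bv.e F) = D.hor.s (D.bv.e A) := by rw [D.match_br, hFr, D.match_bl]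
  have hinv : D.hor.e (D.hor.inv (D.bv.e A)) = D.hor.s (D.hor.inv (D.bv.e F)) := by
    rw [D.hor.e_inv, D.hor.s_inv, hFA]
  refine of_eqvGen ?_ (flatMap_sbrktWord (L := [(D.bh.comp F A, true), (F, false)]) ?_)
  · calc Sum.inr [.inr x, .inr (D.bv.s A), .inl (D.bh.e A), .inr (D.hor.inv (D.bv.e A)),
            .inl (D.ver.inv (D.bh.s A)), .inr (D.hor.inv x)]
        _ ≈ʷ .inr [.inr (D.hor.comp x (D.bv.s A)), .inl (D.bh.e A), .inr (D.hor.inv (D.bv.e A)),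
            .inl (D.ver.inv (D.bh.s A)), .inr (D.hor.inv x)] := eqvGen_merge_h [] hxA rfl
        _ ≈ʷ .inr [.inr (D.hor.comp x (D.bv.s A)), .inl (D.bh.e A), .inr (D.hor.inv (D.bv.e A)),
            .inr (D.hor.inv (D.bv.e F)), .inr (D.bv.e F),
            .inl (D.ver.inv (D.bh.s A)), .inr (D.hor.inv x)] :=
          .symm _ _ (eqvGen_cancel_linv [_, _, _] (.inr (D.bv.e F)) (by simp))
        _ ≈ʷ .inr [.inr (D.hor.comp x (D.bv.s A)), .inl (D.bh.e A),
            .inr (D.hor.comp (D.hor.inv (D.bv.e A)) (D.hor.inv (D.bv.e F))), .inr (D.bv.e F),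
            .inl (D.ver.inv (D.bh.s A)), .inr (D.hor.inv x)] := eqvGen_merge_h [_, _] hinv rfl
        _ ≈ʷ .inr [.inr (D.hor.comp x (D.bv.s A)), .inl (D.bh.e A),
            .inr (D.hor.comp (D.hor.inv (D.bv.e A)) (D.hor.inv (D.bv.e F))),
            .inl (D.ver.inv (D.bh.s F)), .inl (D.bh.s F), .inr (D.bv.e F),
            .inl (D.ver.inv (D.bh.s A)), .inr (D.hor.inv x)] :=
          .symm _ _ (eqvGen_cancel_linv [_, _, _] (.inl (D.bh.s F)) (by simp))
        _ = _ := by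
          rw [mkW_of_ne_nil (by simp [sbrktWord, brktWord])]
          simp [sbrktWord, brktWord, linv, D.t_hcomp _ _ hFr, D.b_hcomp _ _ hFr,
            D.bh.s_comp _ _ hFr, D.bh.e_comp _ _ hFr, hFt, hFr, D.hor.inv_comp_rev hFA,
            PreGroupoid.inv_inv]
  · simp [D.bh.s_comp _ _ hFr, ← D.match_tl F, hFt]

theorem conj_brktWord_inl (hfill : D.Filling) {A : Bx} {f : Vv}
    (hf : D.ver.e f = D.ver.s (D.bh.s A)) :
    InJ D (D.ver.s f) (.inr (.inl f :: brktWord D A ++ [.inl (D.ver.inv f)])) := by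
  obtain ⟨F, hFb, hFl⟩ := D.exists_bot_lft_of_filling hfill (hf.trans (D.match_tl A).symm)
  have hFA : D.ver.e (D.bh.e F) = D.ver.s (D.bh.e A) := by rw [← D.match_br, hFb, D.match_tr]
  have hinv : D.ver.e (D.ver.inv (D.bh.s A)) = D.ver.s (D.ver.inv f) := by
    rw [D.ver.e_inv, D.ver.s_inv, hf]
  refine of_eqvGen ?_ (flatMap_sbrktWord (L := [(F, false), (D.bv.comp F A, true)]) ?_)
  · calc Sum.inr [.inl f, .inr (D.bv.s A), .inl (D.bh.e A), .inr (D.hor.inv (D.bv.e A)),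
            .inl (D.ver.inv (D.bh.s A)), .inl (D.ver.inv f)]
        _ ≈ʷ .inr [.inl f, .inr (D.bv.s A), .inl (D.bh.e A), .inr (D.hor.inv (D.bv.e A)),
            .inl (D.ver.comp (D.ver.inv (D.bh.s A)) (D.ver.inv f))] :=
          eqvGen_merge_v [_, _, _, _] hinv rfl
        _ ≈ʷ .inr [.inl f, .inr (D.bv.s A), .inl (D.ver.inv (D.bh.e F)), .inl (D.bh.e F),
            .inl (D.bh.e A), .inr (D.hor.inv (D.bv.e A)),
            .inl (D.ver.comp (D.ver.inv (D.bh.s A)) (D.ver.inv f))] :=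
          .symm _ _ (eqvGen_cancel_linv [_, _] (.inl (D.bh.e F)) (by simp))
        _ ≈ʷ .inr [.inl f, .inr (D.bv.s A), .inl (D.ver.inv (D.bh.e F)),
            .inl (D.ver.comp (D.bh.e F) (D.bh.e A)), .inr (D.hor.inv (D.bv.e A)),
            .inl (D.ver.comp (D.ver.inv (D.bh.s A)) (D.ver.inv f))] :=
          eqvGen_merge_v [_, _, _] hFA rfl
        _ ≈ʷ .inr [.inl f, .inr (D.bv.s A), .inl (D.ver.inv (D.bh.e F)),
            .inr (D.hor.inv (D.bv.s F)), .inr (D.bv.s F),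
            .inl (D.ver.comp (D.bh.e F) (D.bh.e A)), .inr (D.hor.inv (D.bv.e A)),
            .inl (D.ver.comp (D.ver.inv (D.bh.s A)) (D.ver.inv f))] :=
          .symm _ _ (eqvGen_cancel_linv [_, _, _] (.inr (D.bv.s F)) (by simp))
        _ = _ := by
          rw [mkW_of_ne_nil (by simp [sbrktWord, brktWord])]
          simp [sbrktWord, brktWord, linv, D.bv.s_comp _ _ hFb, D.bv.e_comp _ _ hFb,
            D.l_vcomp _ _ hFb, D.r_vcomp _ _ hFb, hFb, hFl, D.ver.inv_comp_rev hf,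
            PreGroupoid.inv_inv]
  · simp [D.l_vcomp _ _ hFb, hFl, D.ver.s_comp _ _ hf]

theorem conj_sbrktWord (hfill : D.Filling) {z : Letter Vv Hh} {b : Bx × Bool}
    (hz : ltgt D.ver D.hor z = D.ver.s (D.bh.s b.1)) :
    InJ D (lsrc D.ver D.hor z) (.inr (z :: sbrktWord D b ++ [linv D.ver D.hor z])) := by
  have hbrkt : InJ D (lsrc D.ver D.hor z) (.inr (z :: brktWord D b.1 ++ [linv D.ver D.hor z])) := by
    cases z with
    | inl f => exact conj_brktWord_inl hfill hz
    | inr x => exact conj_brktWord_inr hfill hz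
  obtain ⟨A, _ | _⟩ := b
  · simpa [_root_.pathInv, sbrktWord, wordInv, linv_linv] using hbrkt.pathInv
  · exact hbrkt

theorem conj_flatMap_sbrktWord (hfill : D.Filling) (z : Letter Vv Hh) :
    ∀ L : List (Bx × Bool), (∀ b ∈ L, D.ver.s (D.bh.s b.1) = ltgt D.ver D.hor z) →
      InJ D (lsrc D.ver D.hor z) (.inr (z :: L.flatMap (sbrktWord D) ++ [linv D.ver D.hor z]))
  | [], _ => of_eqvGen (eqvGen_pair_linv z) (flatMap_sbrktWord (L := []) (by simp))
  | b :: L, hL => by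
    have hsplit := eqvGen_cancel_linv (GV := D.ver) (GH := D.hor) (z :: sbrktWord D b)
      (l₂ := L.flatMap (sbrktWord D) ++ [linv D.ver D.hor z]) z (by simp)
    refine of_eqvGen (.symm _ _ (by simpa using hsplit)) ?_
    simpa using append (by simp) (conj_sbrktWord hfill (hL b (by simp)).symm)
      (conj_flatMap_sbrktWord hfill z L fun b hb => hL b (by simp [hb]))

theorem conj (hfill : D.Filling) {z : Letter Vv Hh} {ω : Pt ⊕ List (Letter Vv Hh)}
    (h : InJ D (ltgt D.ver D.hor z) ω) :
    InJ D (lsrc D.ver D.hor z) (.inr (z :: letters ω ++ [linv D.ver D.hor z])) := by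
  obtain ⟨L, hL, hω⟩ := h
  have hconj := eqvGen_context [z] [linv D.ver D.hor z] (by simp) hω
  exact of_eqvGen (by simpa using hconj) (conj_flatMap_sbrktWord hfill z L hL)

end InJ

theorem bracket_subgroupoid_normal_general (D : DoubleGroupoid Pt Bx Hh Vv)
    (hfill : ∀ (x : Hh) (g : Vv), D.hor.e x = D.ver.s g →
      ∃ A : Bx, D.bv.s A = x ∧ D.bh.e A = g) :
    ∀ (A : Bx) (u : List (Letter Vv Hh)), Composable D.ver D.hor u →
      (∀ z ∈ u.getLast?, ltgt D.ver D.hor z = D.ver.s (D.bh.s A)) →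
      InJ D ((u.head?.map (lsrc D.ver D.hor)).getD (D.ver.s (D.bh.s A)))
        (.inr (u ++ brktWord D A ++ (u.map (linv D.ver D.hor)).reverse)) := by
  intro A u
  induction u with
  | nil => exact fun _ _ => ⟨[(A, true)], by simp, .refl _⟩
  | cons z u ih =>
    intro hcomp hlast
    have hz : ltgt D.ver D.hor z = (u.head?.map (lsrc D.ver D.hor)).getD (D.ver.s (D.bh.s A)) := by
      cases u with
      | nil => exact hlast z rfl
      | cons w u => exact (List.isChain_cons_cons.mp hcomp).1
    have hu := ih hcomp.tail fun w hw => hlast w (by cases u <;> simp_all [List.getLast?_cons_cons])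
    rw [← hz] at hu
    simpa using InJ.conj hfill hu

/-- Let `B` be a slim double groupoid satisfying the filling condition, and `J` the
subgroupoid of the free product `V * H` generated by the bracket elements
`[A] = x g y⁻¹ h⁻¹` of the boxes of `B`.  Then `J` is a *normal* subgroup bundle:
for every box `A` and every arrow `u` of `V * H` (given as a composable word in
the letters of `V ⊔ H`) whose target is the base point of the loop `[A]`, the
conjugate `u [A] u⁻¹` lies in `J`. -/
theorem bracket_subgroupoid_normal (D : DoubleGroupoid Pt Bx Hh Vv)
    (hslim : ∀ A A' : Bx, D.bv.s A = D.bv.s A' → D.bv.e A = D.bv.e A' →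
      D.bh.s A = D.bh.s A' → D.bh.e A = D.bh.e A' → A = A')
    (hfill : ∀ (x : Hh) (g : Vv), D.hor.e x = D.ver.s g →
      ∃ A : Bx, D.bv.s A = x ∧ D.bh.e A = g) :
    ∀ (A : Bx) (u : List (Letter Vv Hh)), Composable D.ver D.hor u →
      (∀ z ∈ u.getLast?, ltgt D.ver D.hor z = D.ver.s (D.bh.s A)) →
      InJ D ((u.head?.map (lsrc D.ver D.hor)).getD (D.ver.s (D.bh.s A)))
        (.inr (u ++ brktWord D A ++ (u.map (linv D.ver D.hor)).reverse)) :=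
  bracket_subgroupoid_normal_general D hfill
end

section
/- Let B be a fusion double groupoid, i.e., a finite double groupoid satisfying the filling condition such that (F1) the vertical groupoid V over P is connected and (F2) the bottom-edge map b : E → H from the core groupoid to the horizontal groupoid is injective. Then B is slim: every box of B is uniquely determined by its four edges. -/
/-- Left cancellation in a pre-groupoid. -/
theorem PreGroupoid.cancel_left_s19 {Pt Arr : Type} (G : PreGroupoid Pt Arr) {p k k' : Arr}
    (h1 : G.e p = G.s k) (h2 : G.e p = G.s k') (h : G.comp p k = G.comp p k') : k = k' :=
  calc k = G.comp (G.id (G.s k)) k := (G.id_comp k).symm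
    _ = G.comp (G.comp (G.inv p) p) k := by rw [← h1, ← G.inv_comp p]
    _ = G.comp (G.inv p) (G.comp p k) := G.assoc _ _ _ (G.e_inv p) h1
    _ = G.comp (G.inv p) (G.comp p k') := by rw [h]
    _ = G.comp (G.comp (G.inv p) p) k' := (G.assoc _ _ _ (G.e_inv p) h2).symm
    _ = G.comp (G.id (G.s k')) k' := by rw [G.inv_comp, h2]
    _ = k' := G.id_comp k'

/-- Uniqueness of right inverses in a pre-groupoid. -/
theorem PreGroupoid.eq_inv {Pt Arr : Type} (G : PreGroupoid Pt Arr) {g x : Arr}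
    (hc : G.e g = G.s x) (h : G.comp g x = G.id (G.s g)) : x = G.inv g :=
  G.cancel_left_s19 hc (G.s_inv g).symm (by rw [h, G.comp_inv])

/-- Left edge of a vertical inverse. -/
theorem DoubleGroupoid.lft_vinv {Pt Bx Hh Vv : Type} (D : DoubleGroupoid Pt Bx Hh Vv)
    (A : Bx) : D.bh.s (D.bv.inv A) = D.ver.inv (D.bh.s A) := by
  have hc : D.bv.e A = D.bv.s (D.bv.inv A) := (D.bv.s_inv A).symm
  have h1 : D.bh.s (D.bv.comp A (D.bv.inv A)) =
      D.ver.comp (D.bh.s A) (D.bh.s (D.bv.inv A)) := D.l_vcomp _ _ hc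
  rw [D.bv.comp_inv, D.l_idv, D.match_tl] at h1
  have hcc : D.ver.e (D.bh.s A) = D.ver.s (D.bh.s (D.bv.inv A)) := by
    rw [← D.match_tl (D.bv.inv A), ← hc, D.match_bl]
  exact D.ver.eq_inv hcc h1.symm

/-- Right edge of a vertical inverse. -/
theorem DoubleGroupoid.rgt_vinv {Pt Bx Hh Vv : Type} (D : DoubleGroupoid Pt Bx Hh Vv)
    (A : Bx) : D.bh.e (D.bv.inv A) = D.ver.inv (D.bh.e A) := by
  have hc : D.bv.e A = D.bv.s (D.bv.inv A) := (D.bv.s_inv A).symm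
  have h1 : D.bh.e (D.bv.comp A (D.bv.inv A)) =
      D.ver.comp (D.bh.e A) (D.bh.e (D.bv.inv A)) := D.r_vcomp _ _ hc
  rw [D.bv.comp_inv, D.r_idv, D.match_tr] at h1
  have hcc : D.ver.e (D.bh.e A) = D.ver.s (D.bh.e (D.bv.inv A)) := by
    rw [← D.match_tr (D.bv.inv A), ← hc, D.match_br]
  exact D.ver.eq_inv hcc h1.symm

/-- Let `B` be a fusion double groupoid: a finite double groupoid satisfying the
filling condition such that (F1) the vertical groupoid `V` over `Pt` is connected
and (F2) the bottom-edge map `b : E → H` from the core groupoid to the horizontal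
groupoid is injective.  Then `B` is slim: every box of `B` is uniquely determined
by its four edges. -/
theorem fusion_implies_slim {Pt Bx Hh Vv : Type}
    [Finite Pt] [Finite Bx] [Finite Hh] [Finite Vv]
    (D : DoubleGroupoid Pt Bx Hh Vv)
    (hfill : ∀ (x : Hh) (g : Vv), D.hor.e x = D.ver.s g →
      ∃ A : Bx, D.top A = x ∧ D.rgt A = g)
    (hF1 : ∀ p q : Pt, ∃ g : Vv, D.ver.s g = p ∧ D.ver.e g = q)
    (hF2 : ∀ E E', E ∈ D.core → E' ∈ D.core → D.bot E = D.bot E' → E = E') :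
    ∀ A A' : Bx, D.top A = D.top A' → D.bot A = D.bot A' →
      D.lft A = D.lft A' → D.rgt A = D.rgt A' → A = A' := by
  intro A A' htop hbot hlft hrgt
  simp only [DoubleGroupoid.top, DoubleGroupoid.bot, DoubleGroupoid.lft,
    DoubleGroupoid.rgt] at htop hbot hlft hrgt
  set x := D.bv.s A with hx
  set K := D.bv.comp A (D.bv.inv A') with hK
  -- composability for K
  have h1 : D.bv.e A = D.bv.s (D.bv.inv A') := by rw [D.bv.s_inv, hbot]
  -- edges of K
  have topK : D.bv.s K = x := D.bv.s_comp _ _ h1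
  have botK : D.bv.e K = x := by
    rw [hK, D.bv.e_comp _ _ h1, D.bv.e_inv, ← htop]
  have lftK : D.bh.s K = D.ver.id (D.ver.s (D.bh.s A)) := by
    rw [hK, D.l_vcomp _ _ h1, D.lft_vinv, ← hlft, D.ver.comp_inv]
  have rgtK : D.bh.e K = D.ver.id (D.ver.s (D.bh.e A)) := by
    rw [hK, D.r_vcomp _ _ h1, D.rgt_vinv, ← hrgt, D.ver.comp_inv]
  -- the translating degenerate box
  set P := D.bv.id (D.hor.inv x) with hP
  have hPK : D.bh.e P = D.bh.s K := by
    rw [hP, D.r_idv, D.hor.e_inv, lftK, D.match_tl]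
  set E := D.bh.comp P K with hE
  set q := D.hor.e x with hq
  have topE : D.bv.s E = D.hor.id q := by
    rw [hE, D.t_hcomp _ _ hPK, hP, D.bv.s_id, topK, D.hor.inv_comp]
  have botE : D.bv.e E = D.hor.id q := by
    rw [hE, D.b_hcomp _ _ hPK, hP, D.bv.e_id, botK, D.hor.inv_comp]
  have rgtE : D.bh.e E = D.ver.id (D.ver.s (D.bh.e A)) := by
    rw [hE, D.bh.e_comp _ _ hPK, rgtK]
  -- E is in the core, as is Θ_q
  have hEcore : E ∈ D.core := ⟨⟨q, topE⟩, ⟨_, rgtE⟩⟩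
  have hTcore : D.theta q ∈ D.core := by
    refine ⟨⟨q, ?_⟩, ⟨q, ?_⟩⟩
    · rw [DoubleGroupoid.theta, D.t_idh, D.ver.s_id]
    · rw [DoubleGroupoid.theta, D.bh.e_id]
  have botT : D.bv.e (D.theta q) = D.hor.id q := by
    rw [DoubleGroupoid.theta, D.b_idh, D.ver.e_id]
  -- F2 gives E = Θ_q
  have hET : E = D.theta q := by
    apply hF2 _ _ hEcore hTcore
    show D.bv.e E = D.bv.e (D.theta q)
    rw [botE, botT]
  -- also P ⬝ₕ (id x) = Θ_q
  have hPid : D.bh.comp P (D.bv.id x) = D.theta q := by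
    rw [hP, D.idv_hcomp _ _ (D.hor.e_inv x), D.hor.inv_comp,
      DoubleGroupoid.theta, D.theta_eq]
  -- cancel to get K = id x
  have hKid : K = D.bv.id x := by
    apply D.bh.cancel_left_s19 hPK _ (hE ▸ hET.trans hPid.symm)
    rw [hP, D.r_idv, D.hor.e_inv, D.l_idv]
  -- conclude
  have h2 : D.bv.e (D.bv.inv A') = D.bv.s A' := D.bv.e_inv A'
  calc A = D.bv.comp A (D.bv.id (D.bv.e A)) := (D.bv.comp_id A).symm
    _ = D.bv.comp A (D.bv.comp (D.bv.inv A') A') := by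
        rw [hbot, ← D.bv.inv_comp A']
    _ = D.bv.comp (D.bv.comp A (D.bv.inv A')) A' := (D.bv.assoc _ _ _ h1 h2).symm
    _ = D.bv.comp (D.bv.id (D.bv.s A')) A' := by rw [← hK, hKid, htop]
    _ = A' := D.bv.id_comp A'
end
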